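/- Let G be r₁-regular and H be r₂-regular on the same n-vertex set, with A_G and A_H commuting. Suppose U_{A_G}(τ)(e_a − e_b) = χ(e_a − e_b) for some unit complex χ and U_{A_H}(τ)(e_a − e_b) = k(e_a − e_b) with k ∈ {i, −i}. Then the double cover G ⋉ H has Laplacian perfect pair state transfer between e_0 ⊗ (e_a − e_b) and e_1 ⊗ (e_a − e_b) at time τ; specifically, U_{L_{G⋉H}}(τ)(e_0 ⊗ (e_a − e_b)) = ∓i χ^{−1} exp(−iτ(r₁+r₂)) · e_1 ⊗ (e_a − e_b) (sign depending on k = ±i). -/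

import Mathlib

open Matrix Complex Kronecker

/-- transition matrix `U_M(t) = exp(-itM)` -/
noncomputable def U {V : Type*} [Fintype V] [DecidableEq V] (M : Matrix V V ℂ) (t : ℝ) :
    Matrix V V ℂ :=
  NormedSpace.exp ((-(Complex.I * (t : ℂ))) • M)

/-- standard basis vector -/
noncomputable def e {V : Type*} [DecidableEq V] (v : V) : V → ℂ := Pi.single v 1

/-- Kronecker product of vectors -/
def vecKron {α β : Type*} (u : α → ℂ) (v : β → ℂ) : α × β → ℂ := fun p => u p.1 * v p.2

/-! Conjugating by `T = [[1, 1], [1, -1]]` block-diagonalises `A_G ⋉ A_H` into `A_G + A_H` and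
`A_G - A_H`, so the transition matrix of the double cover has blocks `½(U_{A_G+A_H} ± U_{A_G-A_H})`.
In the Laplacian the scalar `(r₁ + r₂) I` only contributes the phase `exp(-iτ(r₁ + r₂))`, and
`U_{-M}(τ) = U_M(-τ)`. Since `A_G` and `A_H` commute, `e_a - e_b` is an eigenvector of
`U_{A_G ± A_H}(-τ)` with eigenvalue `χ⁻¹ k^{∓1}`; as `k⁻¹ = -k`, the first block cancels and the
second is `-k χ⁻¹`. -/

open scoped Nat

namespace Matrix

variable {m l R 𝔸 : Type*}

def fromBlocksDiagAddMonoidHom (m l R : Type*) [AddZeroClass R] :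
    Matrix m m R × Matrix l l R →+ Matrix (m ⊕ l) (m ⊕ l) R where
  toFun p := fromBlocks p.1 0 0 p.2
  map_zero' := fromBlocks_zero
  map_add' p q := by simp [fromBlocks_add]

theorem continuous_fromBlocksDiagAddMonoidHom [TopologicalSpace R] [AddZeroClass R] :
    Continuous (fromBlocksDiagAddMonoidHom m l R) :=
  continuous_fst.matrix_fromBlocks continuous_const continuous_const continuous_snd

variable [Fintype m] [DecidableEq m] [Fintype l] [DecidableEq l]

section Normed

variable [NormedRing 𝔸] [NormedAlgebra ℚ 𝔸] [CompleteSpace 𝔸]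

open scoped Norms.Operator in
theorem hasSum_exp (A : Matrix m m 𝔸) :
    HasSum (fun k : ℕ => (k !⁻¹ : ℚ) • A ^ k) (NormedSpace.exp A) :=
  -- instance search does not see that the operator-norm uniformity is the entrywise one
  @NormedSpace.exp_series_hasSum_exp' ℚ _ _ _ _ _ _ (Matrix.instCompleteSpace m m 𝔸) A

theorem exp_fromBlocks_diagonal (X : Matrix m m 𝔸) (Y : Matrix l l 𝔸) :
    NormedSpace.exp (fromBlocks X 0 0 Y) =
      fromBlocks (NormedSpace.exp X) 0 0 (NormedSpace.exp Y) := by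
  refine (hasSum_exp _).unique ?_
  simpa [fromBlocksDiagAddMonoidHom, Function.comp_def, fromBlocks_diagonal_pow,
    fromBlocks_smul] using
    ((hasSum_exp X).prodMk (hasSum_exp Y)).map _ continuous_fromBlocksDiagAddMonoidHom

end Normed

def blockHadamard (m R : Type*) [DecidableEq m] [Ring R] : Matrix (m ⊕ m) (m ⊕ m) R :=
  fromBlocks 1 1 1 (-1)

theorem blockHadamard_mul_fromBlocks_mul_blockHadamard [Ring R] (P Q : Matrix m m R) :
    blockHadamard m R * fromBlocks P 0 0 Q * blockHadamard m R =
      fromBlocks (P + Q) (P - Q) (P - Q) (P + Q) := by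
  simp [blockHadamard, fromBlocks_multiply, sub_eq_add_neg]

theorem blockHadamard_mul_self [Ring R] :
    blockHadamard m R * blockHadamard m R = (2 : R) • 1 := by
  simp [blockHadamard, fromBlocks_multiply, ← fromBlocks_one, fromBlocks_add, two_smul]

theorem blockHadamard_mul_inv_two_smul {K : Type*} [Field K] [CharZero K] :
    blockHadamard m K * ((2 : K)⁻¹ • blockHadamard m K) = 1 := by
  rw [Matrix.mul_smul, blockHadamard_mul_self, smul_smul, inv_mul_cancel₀ two_ne_zero, one_smul]

theorem exp_fromBlocks_self {𝕂 : Type*} [NormedField 𝕂] [NormedAlgebra ℚ 𝕂] [CompleteSpace 𝕂]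
    (A B : Matrix m m 𝕂) :
    NormedSpace.exp (fromBlocks A B B A) =
      (2 : 𝕂)⁻¹ • fromBlocks
        (NormedSpace.exp (A + B) + NormedSpace.exp (A - B))
        (NormedSpace.exp (A + B) - NormedSpace.exp (A - B))
        (NormedSpace.exp (A + B) - NormedSpace.exp (A - B))
        (NormedSpace.exp (A + B) + NormedSpace.exp (A - B)) := by
  have : CharZero 𝕂 := algebraRat.charZero 𝕂
  have hinv := inv_eq_right_inv (blockHadamard_mul_inv_two_smul (m := m) (K := 𝕂))
  have hunit : IsUnit (blockHadamard m 𝕂) :=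
    (isUnit_iff_isUnit_det _).2 (isUnit_det_of_right_inverse blockHadamard_mul_inv_two_smul)
  have hdiag : fromBlocks A B B A =
      blockHadamard m 𝕂 * fromBlocks (A + B) 0 0 (A - B) * (blockHadamard m 𝕂)⁻¹ := by
    rw [hinv, Matrix.mul_smul, blockHadamard_mul_fromBlocks_mul_blockHadamard, fromBlocks_smul]
    congr 1 <;> module
  rw [hdiag, exp_conj _ _ hunit, exp_fromBlocks_diagonal, hinv, Matrix.mul_smul,
    blockHadamard_mul_fromBlocks_mul_blockHadamard]

end Matrix

section TransitionMatrix

variable {V : Type*} [Fintype V] [DecidableEq V]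

theorem U_add_of_commute {M N : Matrix V V ℂ} (h : Commute M N) (t : ℝ) :
    U (M + N) t = U M t * U N t := by
  rw [U, U, U, smul_add, Matrix.exp_add_of_commute _ _ ((h.smul_left _).smul_right _)]

theorem U_sub_of_commute {M N : Matrix V V ℂ} (h : Commute M N) (t : ℝ) :
    U (M - N) t = U M t * U N (-t) := by
  rw [sub_eq_add_neg, U_add_of_commute (h.neg_right) t, U, U, U]
  congr 2
  push_cast
  rw [smul_neg, ← neg_smul]
  ring_nf

theorem U_neg_mul_U (M : Matrix V V ℂ) (t : ℝ) : U M (-t) * U M t = 1 := by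
  rw [U, U, ← Matrix.exp_add_of_commute _ _ ((Commute.refl M).smul_left _ |>.smul_right _),
    ← add_smul]
  push_cast
  simp

theorem U_neg_mulVec_of_mulVec_eq_smul {M : Matrix V V ℂ} {t : ℝ} {v : V → ℂ} {μ : ℂ}
    (hμ : μ ≠ 0) (h : U M t *ᵥ v = μ • v) : U M (-t) *ᵥ v = μ⁻¹ • v := by
  have := congrArg (U M (-t) *ᵥ ·) h
  simp only [mulVec_mulVec, U_neg_mul_U, one_mulVec, mulVec_smul] at this
  exact eq_inv_smul_iff₀ hμ |>.2 this.symm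

theorem exp_smul_one (z : ℂ) :
    NormedSpace.exp (z • (1 : Matrix V V ℂ)) = Complex.exp z • (1 : Matrix V V ℂ) := by
  rw [smul_one_eq_diagonal, exp_diagonal, smul_one_eq_diagonal, Pi.exp_def, Complex.exp_eq_exp_ℂ]

theorem U_smul_one_sub (c : ℂ) (M : Matrix V V ℂ) (t : ℝ) :
    U (c • 1 - M) t = Complex.exp (-(I * t * c)) • U M (-t) := by
  have hsplit : (-(I * t)) • (c • 1 - M) = (-(I * t * c)) • (1 : Matrix V V ℂ) +
      (-(I * ((-t : ℝ) : ℂ))) • M := by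
    push_cast
    module
  rw [U, hsplit, exp_add_of_commute _ _ ((Commute.one_left M).smul_left _ |>.smul_right _),
    exp_smul_one, smul_one_mul, U]

theorem U_fromBlocks_self (A B : Matrix V V ℂ) (t : ℝ) :
    U (fromBlocks A B B A) t = (2 : ℂ)⁻¹ • fromBlocks
      (U (A + B) t + U (A - B) t) (U (A + B) t - U (A - B) t)
      (U (A + B) t - U (A - B) t) (U (A + B) t + U (A - B) t) := by
  rw [U, fromBlocks_smul, exp_fromBlocks_self, ← smul_add, ← smul_sub]
  rfl

theorem U_fromBlocks_self_mulVec_inl (A B : Matrix V V ℂ) (t : ℝ) (v : V → ℂ) :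
    U (fromBlocks A B B A) t *ᵥ Sum.elim v 0 = (2 : ℂ)⁻¹ • Sum.elim
      (U (A + B) t *ᵥ v + U (A - B) t *ᵥ v) (U (A + B) t *ᵥ v - U (A - B) t *ᵥ v) := by
  rw [U_fromBlocks_self, smul_mulVec, fromBlocks_mulVec]
  simp [add_mulVec, sub_mulVec]

end TransitionMatrix

theorem stmt18_general {n r₁ r₂ : ℕ} (G H : SimpleGraph (Fin n))
    [DecidableRel G.Adj] [DecidableRel H.Adj]
    (hcomm : G.adjMatrix ℂ * H.adjMatrix ℂ = H.adjMatrix ℂ * G.adjMatrix ℂ)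
    (τ : ℝ) (a b : Fin n)
    (χ k : ℂ) (hχ : ‖χ‖ = 1) (hk : k = Complex.I ∨ k = -Complex.I)
    (hGper : (U (G.adjMatrix ℂ) τ) *ᵥ (e a - e b) = χ • (e a - e b))
    (hHper : (U (H.adjMatrix ℂ) τ) *ᵥ (e a - e b) = k • (e a - e b)) :
    (U (((r₁ + r₂ : ℕ) : ℂ) • (1 : Matrix (Fin n ⊕ Fin n) (Fin n ⊕ Fin n) ℂ)
          - Matrix.fromBlocks (G.adjMatrix ℂ) (H.adjMatrix ℂ)
              (H.adjMatrix ℂ) (G.adjMatrix ℂ)) τ) *ᵥ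
        Sum.elim ((e a - e b : Fin n → ℂ)) (0 : Fin n → ℂ)
      = ((-k) * χ⁻¹ * Complex.exp (-(Complex.I * (τ : ℂ) * ((r₁ + r₂ : ℕ) : ℂ)))) •
          Sum.elim (0 : Fin n → ℂ) ((e a - e b : Fin n → ℂ)) := by
  set A := G.adjMatrix ℂ
  set B := H.adjMatrix ℂ
  set v : Fin n → ℂ := e a - e b
  have hχ0 : χ ≠ 0 := norm_ne_zero_iff.1 (hχ ▸ one_ne_zero)
  have hk0 : k ≠ 0 := by rcases hk with rfl | rfl <;> simp
  have hk_inv : k⁻¹ = -k := by rcases hk with rfl | rfl <;> simp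
  have hA := U_neg_mulVec_of_mulVec_eq_smul hχ0 hGper
  have hB := U_neg_mulVec_of_mulVec_eq_smul hk0 hHper
  have hplus : U (A + B) (-τ) *ᵥ v = (k⁻¹ * χ⁻¹) • v := by
    rw [U_add_of_commute hcomm, ← mulVec_mulVec, hB, mulVec_smul, hA, smul_smul]
  have hminus : U (A - B) (-τ) *ᵥ v = (k * χ⁻¹) • v := by
    rw [U_sub_of_commute hcomm, neg_neg, ← mulVec_mulVec, hHper, mulVec_smul, hA, smul_smul]
  rw [U_smul_one_sub, smul_mulVec, U_fromBlocks_self_mulVec_inl, hplus, hminus, hk_inv]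
  ext (i | i)
  · simp
  · simp
    ring

theorem stmt18 {n r₁ r₂ : ℕ} (G H : SimpleGraph (Fin n))
    [DecidableRel G.Adj] [DecidableRel H.Adj]
    (hG : G.IsRegularOfDegree r₁) (hH : H.IsRegularOfDegree r₂)
    (hcomm : G.adjMatrix ℂ * H.adjMatrix ℂ = H.adjMatrix ℂ * G.adjMatrix ℂ)
    (τ : ℝ) (a b : Fin n) (hab : a ≠ b)
    (χ k : ℂ) (hχ : ‖χ‖ = 1) (hk : k = Complex.I ∨ k = -Complex.I)
    (hGper : (U (G.adjMatrix ℂ) τ) *ᵥ (e a - e b) = χ • (e a - e b))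
    (hHper : (U (H.adjMatrix ℂ) τ) *ᵥ (e a - e b) = k • (e a - e b)) :
    (U (((r₁ + r₂ : ℕ) : ℂ) • (1 : Matrix (Fin n ⊕ Fin n) (Fin n ⊕ Fin n) ℂ)
          - Matrix.fromBlocks (G.adjMatrix ℂ) (H.adjMatrix ℂ)
              (H.adjMatrix ℂ) (G.adjMatrix ℂ)) τ) *ᵥ
        Sum.elim ((e a - e b : Fin n → ℂ)) (0 : Fin n → ℂ)
      = ((-k) * χ⁻¹ * Complex.exp (-(Complex.I * (τ : ℂ) * ((r₁ + r₂ : ℕ) : ℂ)))) •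
          Sum.elim (0 : Fin n → ℂ) ((e a - e b : Fin n → ℂ)) :=
  stmt18_general G H hcomm τ a b χ k hχ hk hGper hHper
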